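/- arXiv:2210.17445 — 2 statements merged into one kernel-verified Lean document; each statement's English description precedes it below -/
import Mathlib

section
/- For all integers n ≥ 1 and 1 ≤ l ≤ n, l! · ∑_{S} ∏_{A∈S} |A|! = n! · binom(n−1, l−1), where the sum ranges over all partitions S of the set {1,…,n} into exactly l nonempty pairwise disjoint blocks whose union is {1,…,n}; consequently ∑_{S} ∏_{A∈S} |A|! ≤ n!·(n−1)^{l−1}/l!. -/
open scoped Classical

/-- The set of partitions of `{1,…,n}` (modelled by `Fin n`) into exactly `l` nonempty
pairwise disjoint blocks covering everything. -/
noncomputable def partitionsInto (n l : ℕ) : Finset (Finset (Finset (Fin n))) :=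
  Finset.univ.filter fun S =>
    S.card = l ∧ (∀ A ∈ S, A.Nonempty) ∧
      (S : Set (Finset (Fin n))).PairwiseDisjoint id ∧
      ∀ x : Fin n, ∃ A ∈ S, x ∈ A


open Finset

private lemma ivt_aux (g : ℕ → ℕ) (h0 : g 0 = 0) (hstep : ∀ j, g (j+1) ≤ g j + 1) :
    ∀ N k, k ≤ g N → ∃ j, j ≤ N ∧ g j = k := by
  intro N
  induction N with
  | zero => intro k hk; exact ⟨0, le_refl 0, by omega⟩
  | succ N ih =>
    intro k hk
    by_cases h : k ≤ g N
    · obtain ⟨j, hj, hj2⟩ := ih k h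
      exact ⟨j, by omega, hj2⟩
    · exact ⟨N+1, le_refl _, by have := hstep N; omega⟩

private noncomputable def countFun {N : ℕ} (s : Finset (Fin N)) (j : ℕ) : ℕ :=
  (s.filter (fun i : Fin N => (i : ℕ) < j)).card

private lemma countFun_zero {N : ℕ} (s : Finset (Fin N)) : countFun s 0 = 0 := by
  simp [countFun]

private lemma countFun_succ {N : ℕ} (s : Finset (Fin N)) (j : ℕ) (hj : j < N) :
    countFun s (j+1) = countFun s j + (if (⟨j, hj⟩ : Fin N) ∈ s then 1 else 0) := by
  unfold countFun
  by_cases hm : (⟨j, hj⟩ : Fin N) ∈ s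
  · rw [if_pos hm]
    have heq : s.filter (fun i : Fin N => (i:ℕ) < j+1) = insert ⟨j, hj⟩ (s.filter (fun i : Fin N => (i:ℕ) < j)) := by
      ext i
      simp only [mem_filter, mem_insert]
      constructor
      · rintro ⟨his, hlt⟩
        rcases Nat.lt_succ_iff_lt_or_eq.mp hlt with h | h
        · exact Or.inr ⟨his, h⟩
        · exact Or.inl (Fin.ext h)
      · rintro (rfl | ⟨his, hlt⟩)
        · exact ⟨hm, Nat.lt_succ_self _⟩
        · exact ⟨his, Nat.lt_succ_of_lt hlt⟩
    rw [heq, card_insert_of_notMem (by simp)]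
  · rw [if_neg hm]
    have heq : s.filter (fun i : Fin N => (i:ℕ) < j+1) = s.filter (fun i : Fin N => (i:ℕ) < j) := by
      ext i
      simp only [mem_filter, and_congr_right_iff]
      intro his
      constructor
      · intro hlt
        rcases Nat.lt_succ_iff_lt_or_eq.mp hlt with h | h
        · exact h
        · exact absurd (by rwa [show i = ⟨j, hj⟩ from Fin.ext h] at his) hm
      · exact Nat.lt_succ_of_lt
    rw [heq, Nat.add_zero]

private lemma countFun_ge {N : ℕ} (s : Finset (Fin N)) (j : ℕ) (hj : N ≤ j) :
    countFun s j = s.card := by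
  unfold countFun
  rw [filter_true_of_mem]
  intro i _
  exact lt_of_lt_of_le i.isLt hj

private lemma countFun_le {N : ℕ} (s : Finset (Fin N)) (j : ℕ) : countFun s j ≤ s.card :=
  card_filter_le _ _

private lemma countFun_mono {N : ℕ} (s : Finset (Fin N)) {j k : ℕ} (h : j ≤ k) :
    countFun s j ≤ countFun s k := by
  apply card_le_card
  intro i hi
  rw [mem_filter] at hi ⊢
  exact ⟨hi.1, lt_of_lt_of_le hi.2 h⟩

private lemma countFun_step {N : ℕ} (s : Finset (Fin N)) (j : ℕ) :
    countFun s (j+1) ≤ countFun s j + 1 := by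
  by_cases hj : j < N
  · rw [countFun_succ s j hj]; split <;> omega
  · push_neg at hj
    rw [countFun_ge s (j+1) (by omega), countFun_ge s j hj]
    omega

private noncomputable def cutSet {N L : ℕ} (m : Fin (N+1) → Fin (L+1)) : Finset (Fin N) :=
  univ.filter (fun i => m i.castSucc < m i.succ)

private lemma step_le {N L : ℕ} (m : Fin (N+1) → Fin (L+1)) (hmono : Monotone m)
    (hsurj : Function.Surjective m) (i : Fin N) :
    (m i.succ : ℕ) ≤ (m i.castSucc : ℕ) + 1 := by
  by_contra h
  push_neg at h
  obtain ⟨a, ha⟩ := hsurj ⟨(m i.castSucc : ℕ) + 1, lt_trans h (m i.succ).isLt⟩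
  have h1 : m i.castSucc < m a := by
    rw [ha]; exact Fin.lt_def.mpr (Nat.lt_succ_self _)
  have h2 : i.castSucc < a := by
    by_contra h2
    push_neg at h2
    exact absurd (hmono h2) (not_le.mpr h1)
  have h3 : m i.succ ≤ m a := hmono (Fin.castSucc_lt_iff_succ_le.mp h2)
  have h4 := Fin.le_def.mp h3
  rw [ha] at h4
  simp only [] at h4
  omega

private lemma map_zero_val {N L : ℕ} (m : Fin (N+1) → Fin (L+1)) (hmono : Monotone m)
    (hsurj : Function.Surjective m) : (m 0 : ℕ) = 0 := by
  obtain ⟨a, ha⟩ := hsurj 0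
  have h := hmono (Fin.zero_le a)
  rw [ha] at h
  exact Nat.le_zero.mp (Fin.le_def.mp h)

private lemma key_val {N L : ℕ} (m : Fin (N+1) → Fin (L+1)) (hmono : Monotone m)
    (hsurj : Function.Surjective m) :
    ∀ j (hj : j < N + 1), (m ⟨j, hj⟩ : ℕ) = countFun (cutSet m) j := by
  intro j
  induction j with
  | zero =>
    intro hj
    rw [countFun_zero]
    exact map_zero_val m hmono hsurj
  | succ j ih =>
    intro hj
    have hjN : j < N := by omega
    rw [countFun_succ (cutSet m) j hjN, ← ih (by omega)]
    have hcs : (⟨j, by omega⟩ : Fin (N+1)) = (⟨j, hjN⟩ : Fin N).castSucc := rfl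
    have hsc : (⟨j+1, hj⟩ : Fin (N+1)) = (⟨j, hjN⟩ : Fin N).succ := rfl
    rw [hcs, hsc]
    set i : Fin N := ⟨j, hjN⟩
    by_cases hlt : m i.castSucc < m i.succ
    · have hmem : i ∈ cutSet m := by simp [cutSet, hlt]
      rw [if_pos hmem]
      have h1 := step_le m hmono hsurj i
      have h2 : (m i.castSucc : ℕ) < (m i.succ : ℕ) := Fin.lt_def.mp hlt
      omega
    · have hmem : i ∉ cutSet m := by simp [cutSet, hlt]
      rw [if_neg hmem]
      have heq : m i.castSucc = m i.succ :=
        le_antisymm (hmono (Fin.castSucc_le_succ i)) (not_lt.mp hlt)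
      have h2 := congrArg Fin.val heq
      omega

private lemma last_val {N L : ℕ} (m : Fin (N+1) → Fin (L+1)) (hmono : Monotone m)
    (hsurj : Function.Surjective m) : (m (Fin.last N) : ℕ) = L := by
  obtain ⟨a, ha⟩ := hsurj (Fin.last L)
  have h := hmono (Fin.le_last a)
  rw [ha] at h
  have h1 := Fin.le_def.mp h
  have h2 := (m (Fin.last N)).isLt
  simp only [Fin.val_last] at h1
  omega

private lemma card_cutSet {N L : ℕ} (m : Fin (N+1) → Fin (L+1)) (hmono : Monotone m)
    (hsurj : Function.Surjective m) : (cutSet m).card = L := by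
  have h1 := key_val m hmono hsurj N (Nat.lt_succ_self N)
  rw [countFun_ge _ _ (le_refl N)] at h1
  rw [← h1]
  exact last_val m hmono hsurj

private noncomputable def mkFun {N L : ℕ} (s : Finset (Fin N)) (hs : s.card = L) :
    Fin (N+1) → Fin (L+1) :=
  fun j => ⟨countFun s j, by have := countFun_le s j; omega⟩

private lemma mkFun_mono {N L : ℕ} (s : Finset (Fin N)) (hs : s.card = L) :
    Monotone (mkFun s hs) := by
  intro j k h
  exact Fin.mk_le_mk.mpr (countFun_mono s (Fin.le_def.mp h))

private lemma mkFun_surj {N L : ℕ} (s : Finset (Fin N)) (hs : s.card = L) :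
    Function.Surjective (mkFun s hs) := by
  intro k
  have hkN : (k : ℕ) ≤ countFun s N := by
    rw [countFun_ge s N le_rfl, hs]
    exact Nat.lt_succ_iff.mp k.isLt
  obtain ⟨j, hjN, hj⟩ := ivt_aux (countFun s) (countFun_zero s) (countFun_step s) N (k : ℕ) hkN
  exact ⟨⟨j, by omega⟩, Fin.ext hj⟩

private lemma cutSet_mkFun {N L : ℕ} (s : Finset (Fin N)) (hs : s.card = L) :
    cutSet (mkFun s hs) = s := by
  ext i
  simp only [cutSet, mem_filter, mem_univ, true_and]
  rw [Fin.lt_def]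
  show countFun s (i.castSucc : ℕ) < countFun s (i.succ : ℕ) ↔ _
  rw [Fin.coe_castSucc, Fin.val_succ, countFun_succ s (i : ℕ) i.isLt, Fin.eta]
  by_cases hm : i ∈ s
  · simp [hm]
  · simp [hm]

private lemma mkFun_cutSet {N L : ℕ} (m : Fin (N+1) → Fin (L+1)) (hmono : Monotone m)
    (hsurj : Function.Surjective m) :
    mkFun (cutSet m) (card_cutSet m hmono hsurj) = m := by
  funext j
  apply Fin.ext
  show countFun (cutSet m) (j : ℕ) = (m j : ℕ)
  rw [← key_val m hmono hsurj (j : ℕ) j.isLt, Fin.eta]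

private lemma card_monoSurj (N L : ℕ) :
    (univ.filter (fun m : Fin (N+1) → Fin (L+1) => Monotone m ∧ Function.Surjective m)).card
      = N.choose L := by
  have hc : ((univ : Finset (Fin N)).powersetCard L).card = N.choose L := by
    rw [card_powersetCard, card_univ, Fintype.card_fin]
  rw [← hc]
  refine card_bij' (fun m _ => cutSet m)
    (fun s hs => mkFun s (mem_powersetCard.mp hs).2) ?_ ?_ ?_ ?_
  · intro m hm
    have h := mem_filter.mp hm
    exact mem_powersetCard.mpr ⟨subset_univ _, card_cutSet m h.2.1 h.2.2⟩
  · intro s hs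
    exact mem_filter.mpr ⟨mem_univ _, mkFun_mono _ _, mkFun_surj _ _⟩
  · intro m hm
    have h := mem_filter.mp hm
    exact mkFun_cutSet m h.2.1 h.2.2
  · intro s hs
    exact cutSet_mkFun s (mem_powersetCard.mp hs).2

private noncomputable def fiber {n l : ℕ} (f : Fin n → Fin l) (i : Fin l) : Finset (Fin n) :=
  univ.filter (fun a => f a = i)

private lemma mem_fiber {n l : ℕ} {f : Fin n → Fin l} {i : Fin l} {a : Fin n} :
    a ∈ fiber f i ↔ f a = i := by simp [fiber]

private lemma fiber_injective {n l : ℕ} {f : Fin n → Fin l} (hf : Function.Surjective f) :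
    Function.Injective (fiber f) := by
  intro i j h
  obtain ⟨a, ha⟩ := hf i
  have hai : a ∈ fiber f i := mem_fiber.mpr ha
  rw [h] at hai
  exact ha.symm.trans (mem_fiber.mp hai)

private lemma card_mono_comp {n l : ℕ} (f : Fin n → Fin l) :
    (univ.filter (fun σ : Equiv.Perm (Fin n) => Monotone (f ∘ σ))).card
      = ∏ i : Fin l, (fiber f i).card.factorial := by
  rw [← Fintype.card_subtype]
  have e1 : {σ : Equiv.Perm (Fin n) // Monotone (f ∘ σ)}
      ≃ {σ : Equiv.Perm (Fin n) // f ∘ σ = f ∘ Tuple.sort f} :=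
    Equiv.subtypeEquivRight (fun σ => Tuple.comp_sort_eq_comp_iff_monotone.symm)
  have key : ∀ σ : Equiv.Perm (Fin n),
      (f ∘ Tuple.sort f) ∘ ((Tuple.sort f)⁻¹ * σ) = f ∘ σ := by
    intro σ
    funext x
    simp [Equiv.Perm.mul_apply]
  have e2 : {σ : Equiv.Perm (Fin n) // f ∘ σ = f ∘ Tuple.sort f}
      ≃ {τ : Equiv.Perm (Fin n) // (f ∘ Tuple.sort f) ∘ τ = f ∘ Tuple.sort f} := by
    refine Equiv.subtypeEquiv (Equiv.mulLeft (Tuple.sort f)⁻¹) (fun σ => ?_)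
    rw [show ⇑(Equiv.mulLeft (Tuple.sort f)⁻¹) σ = (Tuple.sort f)⁻¹ * σ from rfl, key σ]
  rw [Fintype.card_congr (e1.trans e2), DomMulAct.stabilizer_card]
  apply Finset.prod_congr rfl
  intro i _
  congr 1
  have e3 : {a : Fin n // (f ∘ Tuple.sort f) a = i} ≃ {b : Fin n // f b = i} :=
    Equiv.subtypeEquiv (Tuple.sort f) (fun a => Iff.rfl)
  rw [Fintype.card_congr e3, Fintype.card_subtype]
  rfl

private noncomputable def part {n l : ℕ} (f : Fin n → Fin l) : Finset (Finset (Fin n)) :=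
  univ.image (fiber f)

private lemma part_mem {n l : ℕ} {f : Fin n → Fin l} (hf : Function.Surjective f) :
    part f ∈ partitionsInto n l := by
  rw [partitionsInto, mem_filter]
  refine ⟨mem_univ _, ?_, ?_, ?_, ?_⟩
  · rw [part, card_image_of_injective _ (fiber_injective hf), card_univ, Fintype.card_fin]
  · intro A hA
    obtain ⟨i, _, rfl⟩ := mem_image.mp hA
    obtain ⟨a, ha⟩ := hf i
    exact ⟨a, mem_fiber.mpr ha⟩
  · intro A hA B hB hAB
    rw [Finset.mem_coe] at hA hB
    obtain ⟨i, _, rfl⟩ := mem_image.mp hA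
    obtain ⟨j, _, rfl⟩ := mem_image.mp hB
    simp only [Function.onFun, id]
    rw [Finset.disjoint_left]
    intro a hai haj
    exact hAB (by rw [(mem_fiber.mp hai).symm.trans (mem_fiber.mp haj)])
  · intro x
    exact ⟨fiber f (f x), mem_image_of_mem _ (mem_univ _), mem_fiber.mpr rfl⟩

private lemma sum_surj (n l : ℕ) :
    (univ.filter (fun m : Fin n → Fin l => Monotone m ∧ Function.Surjective m)).card
        * n.factorial
      = ∑ f ∈ univ.filter (fun f : Fin n → Fin l => Function.Surjective f),
          ∏ i : Fin l, (fiber f i).card.factorial := by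
  have hmap : ∀ p ∈ (univ.filter (fun m : Fin n → Fin l => Monotone m ∧ Function.Surjective m))
      ×ˢ (univ : Finset (Equiv.Perm (Fin n))),
      (p.1 ∘ ⇑(p.2)⁻¹ : Fin n → Fin l)
        ∈ univ.filter (fun f : Fin n → Fin l => Function.Surjective f) := by
    rintro ⟨m, σ⟩ hp
    have h := (mem_product.mp hp).1
    exact mem_filter.mpr ⟨mem_univ _, ((mem_filter.mp h).2.2).comp (Equiv.surjective _)⟩
  have h := card_eq_sum_card_fiberwise hmap
  rw [card_product, card_univ, Fintype.card_perm, Fintype.card_fin] at h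
  rw [h]
  apply sum_congr rfl
  intro f hf
  have hfs : Function.Surjective f := (mem_filter.mp hf).2
  rw [← card_mono_comp f]
  refine card_bij' (fun p _ => p.2) (fun σ hσ => (f ∘ σ, σ)) ?_ ?_ ?_ ?_
  · intro p hp
    have h1 := mem_filter.mp hp
    have h2 := mem_filter.mp (mem_product.mp h1.1).1
    have hcomp : f ∘ ⇑p.2 = p.1 := by
      funext x
      have := congrFun h1.2 (p.2 x)
      simpa using this.symm
    exact mem_filter.mpr ⟨mem_univ _, hcomp ▸ h2.2.1⟩
  · intro σ hσ
    have h1 := mem_filter.mp hσ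
    refine mem_filter.mpr ⟨mem_product.mpr ⟨?_, mem_univ _⟩, ?_⟩
    · exact mem_filter.mpr ⟨mem_univ _, h1.2, hfs.comp (Equiv.surjective _)⟩
    · funext x
      simp
  · intro p hp
    have h1 := mem_filter.mp hp
    have hcomp : f ∘ ⇑p.2 = p.1 := by
      funext x
      have := congrFun h1.2 (p.2 x)
      simpa using this.symm
    exact Prod.ext hcomp rfl
  · intro σ hσ
    rfl

private lemma card_part_fiber {n l : ℕ} {S : Finset (Finset (Fin n))}
    (hS : S ∈ partitionsInto n l) :
    ((univ.filter (fun f : Fin n → Fin l => Function.Surjective f)).filter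
      (fun f => part f = S)).card = l.factorial := by
  have hS' := (mem_filter.mp hS).2
  obtain ⟨hS1, hS2, hS3, hS4⟩ := hS'
  -- the block containing a point
  let block : Fin n → {A // A ∈ S} := fun x => ⟨(hS4 x).choose, (hS4 x).choose_spec.1⟩
  have hblock : ∀ x, x ∈ (block x).1 := fun x => (hS4 x).choose_spec.2
  have uniq : ∀ (A : Finset (Fin n)) (hA : A ∈ S) (x : Fin n), x ∈ A →
      (⟨A, hA⟩ : {A // A ∈ S}) = block x := by
    intro A hA x hx
    by_contra hne
    have hne' : A ≠ (block x).1 := fun h => hne (Subtype.ext h)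
    have hd := hS3 hA (block x).2 hne'
    exact (Finset.disjoint_left.mp hd) hx (hblock x)
  have hconst : ∀ (f : Fin n → Fin l), part f = S → ∀ A ∈ S, ∀ x ∈ A, ∀ y ∈ A, f x = f y := by
    intro f hpf A hA x hx y hy
    rw [← hpf] at hA
    obtain ⟨i, _, hi⟩ := mem_image.mp hA
    rw [← hi] at hx hy
    rw [mem_fiber.mp hx, mem_fiber.mp hy]
  have hcard : Fintype.card {A // A ∈ S} = l := by rw [Fintype.card_coe, hS1]
  have htarget : (univ : Finset ({A // A ∈ S} ≃ Fin l)).card = l.factorial := by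
    rw [card_univ, Fintype.card_equiv (Fintype.equivFinOfCardEq hcard), hcard]
  rw [← htarget]
  refine card_bij'
    (fun f hf => Equiv.ofBijective
      (fun A => f ((A : {A // A ∈ S}).1.min' (hS2 _ A.2)))
      ?_)
    (fun e _ => fun x => e (block x)) ?_ ?_ ?_ ?_
  · -- bijectivity of the forward map
    have hf' := mem_filter.mp hf
    have hpf : part f = S := hf'.2
    refine (Fintype.bijective_iff_injective_and_card _).mpr
      ⟨?_, by rw [hcard, Fintype.card_fin]⟩
    intro A B hAB
    have hA : A.1 ∈ part f := hpf.symm ▸ A.2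
    have hB : B.1 ∈ part f := hpf.symm ▸ B.2
    obtain ⟨i, _, hi⟩ := mem_image.mp hA
    obtain ⟨j, _, hj⟩ := mem_image.mp hB
    have h1 : f (A.1.min' (hS2 _ A.2)) = i := by
      apply mem_fiber.mp
      rw [hi]
      exact A.1.min'_mem _
    have h2 : f (B.1.min' (hS2 _ B.2)) = j := by
      apply mem_fiber.mp
      rw [hj]
      exact B.1.min'_mem _
    apply Subtype.ext
    rw [← hi, ← hj]
    congr 1
    rw [← h1, ← h2]
    exact hAB
  · intro f hf
    exact mem_univ _
  · -- backward map lands in the fiber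
    intro e _
    have hfib : ∀ k : Fin l, fiber (fun x => e (block x)) k = (e.symm k).1 := by
      intro k
      ext a
      rw [mem_fiber]
      constructor
      · intro h
        have : block a = e.symm k := by rw [← h]; simp
        rw [← this]
        exact hblock a
      · intro ha
        have := uniq (e.symm k).1 (e.symm k).2 a ha
        rw [Subtype.coe_eta] at this
        rw [← this]
        simp
    have hsurj : Function.Surjective (fun x => e (block x)) := by
      intro k
      obtain ⟨a, ha⟩ := hS2 (e.symm k).1 (e.symm k).2
      have := uniq (e.symm k).1 (e.symm k).2 a ha
      rw [Subtype.coe_eta] at this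
      refine ⟨a, ?_⟩
      simp only [← this]
      simp
    refine mem_filter.mpr ⟨mem_filter.mpr ⟨mem_univ _, hsurj⟩, ?_⟩
    rw [part]
    ext A
    rw [mem_image]
    constructor
    · rintro ⟨k, _, rfl⟩
      rw [hfib k]
      exact (e.symm k).2
    · intro hA
      refine ⟨e ⟨A, hA⟩, mem_univ _, ?_⟩
      rw [hfib, Equiv.symm_apply_apply]
  · -- left inverse
    intro f hf
    have hf' := mem_filter.mp (mem_filter.mp hf).1
    have hpf : part f = S := (mem_filter.mp hf).2
    funext x
    show f ((block x).1.min' (hS2 _ (block x).2)) = f x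
    exact hconst f hpf (block x).1 (block x).2 _ ((block x).1.min'_mem _) x (hblock x)
  · -- right inverse
    intro e _
    apply Equiv.ext
    intro A
    show e (block (A.1.min' (hS2 _ A.2))) = e A
    congr 1
    exact (uniq A.1 A.2 _ (A.1.min'_mem _)).symm.trans (Subtype.coe_eta _ _)

private lemma prod_fiber_eq {n l : ℕ} {f : Fin n → Fin l} (hf : Function.Surjective f)
    {S : Finset (Finset (Fin n))} (hpf : part f = S) :
    ∏ i : Fin l, (fiber f i).card.factorial = ∏ A ∈ S, A.card.factorial := by
  rw [← hpf, part, prod_image]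
  intro i _ j _ h
  exact fiber_injective hf h

private lemma group_sum (n l : ℕ) :
    ∑ f ∈ univ.filter (fun f : Fin n → Fin l => Function.Surjective f),
        ∏ i : Fin l, (fiber f i).card.factorial
      = ∑ S ∈ partitionsInto n l, l.factorial * ∏ A ∈ S, A.card.factorial := by
  rw [← sum_fiberwise_of_maps_to
    (fun f hf => part_mem (mem_filter.mp hf).2)
    (fun f => ∏ i : Fin l, (fiber f i).card.factorial)]
  apply sum_congr rfl
  intro S hS
  have hconst : ∀ f ∈ (univ.filter (fun f : Fin n → Fin l => Function.Surjective f)).filter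
      (fun f => part f = S), ∏ i : Fin l, (fiber f i).card.factorial
        = ∏ A ∈ S, A.card.factorial := by
    intro f hf
    exact prod_fiber_eq (mem_filter.mp (mem_filter.mp hf).1).2 (mem_filter.mp hf).2
  rw [sum_congr rfl hconst, sum_const, card_part_fiber hS, smul_eq_mul]

private lemma main_nat (N L : ℕ) :
    (L+1).factorial * ∑ S ∈ partitionsInto (N+1) (L+1), ∏ A ∈ S, A.card.factorial
      = (N+1).factorial * N.choose L := by
  have h1 := sum_surj (N+1) (L+1)
  rw [card_monoSurj N L, group_sum (N+1) (L+1), ← mul_sum] at h1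
  rw [← h1, mul_comm]


/-- For `1 ≤ l ≤ n`,
`l! · ∑_{S partition of {1,…,n} into l blocks} ∏_{A∈S} |A|! = n! · binom(n−1, l−1)`,
and consequently the partition sum is at most `n! (n−1)^{l−1} / l!`. -/
theorem partition_factorial_sum (n l : ℕ) (hn : 1 ≤ n) (hl : 1 ≤ l) (hln : l ≤ n) :
    (l.factorial : ℚ) * ∑ S ∈ partitionsInto n l, ∏ A ∈ S, (A.card.factorial : ℚ) =
        (n.factorial : ℚ) * ((n - 1).choose (l - 1) : ℚ) ∧
      ∑ S ∈ partitionsInto n l, ∏ A ∈ S, (A.card.factorial : ℚ) ≤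
        (n.factorial : ℚ) * ((n - 1 : ℕ) : ℚ) ^ (l - 1) / (l.factorial : ℚ) := by
  obtain ⟨N, rfl⟩ : ∃ N, n = N + 1 := ⟨n - 1, by omega⟩
  obtain ⟨L, rfl⟩ : ∃ L, l = L + 1 := ⟨l - 1, by omega⟩
  have hsub1 : N + 1 - 1 = N := by omega
  have hsub2 : L + 1 - 1 = L := by omega
  rw [hsub1, hsub2]
  have key : ((L+1).factorial : ℚ) * ∑ S ∈ partitionsInto (N+1) (L+1),
      ∏ A ∈ S, (A.card.factorial : ℚ)
        = ((N+1).factorial : ℚ) * (N.choose L : ℚ) := by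
    exact_mod_cast congrArg (Nat.cast : ℕ → ℚ) (main_nat N L)
  refine ⟨key, ?_⟩
  have hl0 : ((L+1).factorial : ℚ) ≠ 0 := Nat.cast_ne_zero.mpr (Nat.factorial_ne_zero _)
  have hl0' : (0 : ℚ) < ((L+1).factorial : ℚ) := by
    have := Nat.factorial_pos (L+1)
    exact_mod_cast this
  have heq : ∑ S ∈ partitionsInto (N+1) (L+1), ∏ A ∈ S, (A.card.factorial : ℚ)
      = ((N+1).factorial : ℚ) * (N.choose L : ℚ) / ((L+1).factorial : ℚ) := by
    rw [eq_div_iff hl0, mul_comm]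
    exact key
  rw [heq]
  gcongr
  exact_mod_cast Nat.choose_le_pow N L
end

section
/- There is a universal constant C > 0 with the following property. Let t₀ ∈ ℝ∖{0} and V₁, V_j ∈ ℝ, and set z₁ := t₀ − t₀·cos(V₁)·e^{2iV_j} ∈ ℂ and z₂ := −t₀·sin(V₁)·e^{2iV_j} ∈ ℂ (these are the quantities whose arguments define ℵ₁ and ℵ₂ in the special case t₂ = 0, t₁ = −t₀). If z₁ ≠ 0, z₂ ≠ 0 and sin(2V_j) ≠ 0, then, with |cos(ℵ₁ − ℵ₂)| = |Re(z₁·conj(z₂))| / (|z₁|·|z₂|), one has ( 1 − |cos(ℵ₁ − ℵ₂)| )^{−1/2} ≤ C·( 1/|sin(2V_j)| + 1 ); equivalently, 1 − |Re(z₁·conj(z₂))|/(|z₁|·|z₂|) ≥ sin²(2V_j) / ( C²·(1 + |sin(2V_j)|)² ). -/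
/-!
Both numbers carry the common factor `u = t₀ e^{2iV_j}`: `z₁ = u w` with
`w = e^{-2iV_j} - cos V₁` and `z₂ = u · (-sin V₁)` with a real second factor, so
`|cos(ℵ₁ - ℵ₂)| = |Re w| / |w|`. Then `1 - |Re w|/|w| = (Im w)² / (|w| (|w| + |Re w|))`,
and here `Im w = -sin(2V_j)` while `|Re w| ≤ 2`, so `|w| ≤ 2 + |sin(2V_j)|`.
-/

open ComplexConjugate

lemma abs_re_mul_conj_div_norm_mul_of_common_factor {u w : ℂ} {r : ℝ} (hu : u ≠ 0) (hr : r ≠ 0) :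
    |((u * w) * conj (u * r)).re| / (‖u * w‖ * ‖u * (r : ℂ)‖) = |w.re| / ‖w‖ := by
  have hprod : (u * w) * conj (u * r) = ((‖u‖ ^ 2 * r : ℝ) : ℂ) * w := by
    rw [map_mul, Complex.conj_ofReal, mul_mul_mul_comm, Complex.mul_conj']
    push_cast; ring
  have hu' : 0 < ‖u‖ := norm_pos_iff.2 hu
  have hr' : 0 < |r| := abs_pos.2 hr
  rw [hprod, Complex.re_ofReal_mul, abs_mul, abs_mul, norm_mul, norm_mul, Complex.norm_real,
    Real.norm_eq_abs, abs_of_nonneg (sq_nonneg _)]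
  field_simp

lemma one_sub_abs_re_div_norm_eq {w : ℂ} (hw : w ≠ 0) :
    1 - |w.re| / ‖w‖ = w.im ^ 2 / (‖w‖ * (‖w‖ + |w.re|)) := by
  have hn : 0 < ‖w‖ := norm_pos_iff.2 hw
  have hsq : ‖w‖ ^ 2 = w.re ^ 2 + w.im ^ 2 := by
    rw [Complex.sq_norm, Complex.normSq_apply]; ring
  field_simp
  nlinarith [sq_abs w.re]

lemma im_sq_div_le_one_sub_abs_re_div_norm {w : ℂ} (hw : w.im ≠ 0) :
    w.im ^ 2 / (2 * ‖w‖ ^ 2) ≤ 1 - |w.re| / ‖w‖ := by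
  have hw0 : w ≠ 0 := fun h => hw (by simp [h])
  rw [one_sub_abs_re_div_norm_eq hw0]
  have hn : 0 < ‖w‖ := norm_pos_iff.2 hw0
  apply div_le_div_of_nonneg_left (sq_nonneg _) (by positivity)
  nlinarith [Complex.abs_re_le_norm w]

lemma inv_sqrt_le_inv_of_sq_le {x y : ℝ} (hy : 0 < y) (h : y ^ 2 ≤ x) : (√x)⁻¹ ≤ y⁻¹ := by
  apply inv_anti₀ hy
  simpa [Real.sqrt_sq hy.le] using Real.sqrt_le_sqrt h

lemma inv_sqrt_le_mul_one_div_abs_add_one {x b C : ℝ} (hb : b ≠ 0) (hC : 0 < C)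
    (h : b ^ 2 / (C ^ 2 * (1 + |b|) ^ 2) ≤ x) : (√x)⁻¹ ≤ C * (1 / |b| + 1) := by
  have hb' : 0 < |b| := abs_pos.2 hb
  calc (√x)⁻¹ ≤ (|b| / (C * (1 + |b|)))⁻¹ :=
        inv_sqrt_le_inv_of_sq_le (by positivity) (by rwa [div_pow, sq_abs, mul_pow])
    _ = C * (1 / |b| + 1) := by field_simp

lemma im_sq_div_le_one_sub_abs_re_div_norm_of_abs_re_le_two {w : ℂ} (hre : |w.re| ≤ 2)
    (him : w.im ≠ 0) : w.im ^ 2 / (3 ^ 2 * (1 + |w.im|) ^ 2) ≤ 1 - |w.re| / ‖w‖ := by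
  refine le_trans ?_ (im_sq_div_le_one_sub_abs_re_div_norm him)
  have hw0 : w ≠ 0 := fun h => him (by simp [h])
  have hn : ‖w‖ ≤ 2 + |w.im| := (Complex.norm_le_abs_re_add_abs_im w).trans (by linarith)
  apply div_le_div_of_nonneg_left (sq_nonneg _) (by positivity)
  nlinarith [abs_nonneg w.im, norm_nonneg w]

/-- There is a universal constant `C > 0` such that for all
`t₀ ≠ 0` and `V₁, V_j ∈ ℝ`, with `z₁ = t₀ − t₀ cos(V₁) e^{2iV_j}` and
`z₂ = −t₀ sin(V₁) e^{2iV_j}`, if `z₁ ≠ 0`, `z₂ ≠ 0` and `sin(2V_j) ≠ 0` then, writing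
`|cos(ℵ₁ − ℵ₂)| = |Re(z₁ conj(z₂))|/(|z₁||z₂|)`,
`(1 − |cos(ℵ₁ − ℵ₂)|)^{−1/2} ≤ C (1/|sin(2V_j)| + 1)`; equivalently,
`1 − |cos(ℵ₁ − ℵ₂)| ≥ sin²(2V_j)/(C² (1 + |sin(2V_j)|)²)`. -/
theorem angle_lemma_special_case :
    ∃ C : ℝ, 0 < C ∧
      ∀ t₀ V₁ Vj : ℝ, t₀ ≠ 0 →
        let z₁ : ℂ := (t₀ : ℂ) -
          (t₀ : ℂ) * (Real.cos V₁ : ℂ) * Complex.exp (2 * Complex.I * (Vj : ℂ))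
        let z₂ : ℂ :=
          -((t₀ : ℂ) * (Real.sin V₁ : ℂ)) * Complex.exp (2 * Complex.I * (Vj : ℂ))
        z₁ ≠ 0 → z₂ ≠ 0 → Real.sin (2 * Vj) ≠ 0 →
          (Real.sqrt (1 - |(z₁ * (starRingEnd ℂ) z₂).re| /
              (‖z₁‖ * ‖z₂‖)))⁻¹ ≤
            C * (1 / |Real.sin (2 * Vj)| + 1) ∧
          Real.sin (2 * Vj) ^ 2 / (C ^ 2 * (1 + |Real.sin (2 * Vj)|) ^ 2) ≤
            1 - |(z₁ * (starRingEnd ℂ) z₂).re| /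
              (‖z₁‖ * ‖z₂‖) := by
  refine ⟨3, by norm_num, fun t₀ V₁ Vj _ _ hz₂ hsin => ?_⟩
  set e := Complex.exp (2 * Complex.I * (Vj : ℂ))
  set w := Complex.exp (-(2 * Complex.I * (Vj : ℂ))) - (Real.cos V₁ : ℂ)
  have he : e * Complex.exp (-(2 * Complex.I * (Vj : ℂ))) = 1 := by
    rw [← Complex.exp_add, add_neg_cancel, Complex.exp_zero]
  have hz₁ : (t₀ : ℂ) - t₀ * Real.cos V₁ * e = (t₀ * e) * w := by
    linear_combination (-(t₀ : ℂ)) * he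
  have hz₂' : -((t₀ : ℂ) * Real.sin V₁) * e = (t₀ * e) * ((-Real.sin V₁ : ℝ) : ℂ) := by
    push_cast; ring
  obtain ⟨hu, hr⟩ := mul_ne_zero_iff.1 (hz₂' ▸ hz₂)
  have hw_re : w.re = Real.cos (2 * Vj) - Real.cos V₁ := by
    simp [w, Complex.exp_re, Complex.cos_ofReal_re]
  have hw_im : w.im = -Real.sin (2 * Vj) := by simp [w, Complex.exp_im]
  have hre : |w.re| ≤ 2 := by
    rw [hw_re]
    exact (abs_sub _ _).trans
      (by linarith [Real.abs_cos_le_one (2 * Vj), Real.abs_cos_le_one V₁])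
  have hbound := im_sq_div_le_one_sub_abs_re_div_norm_of_abs_re_le_two hre (by simpa [hw_im])
  rw [hw_im, neg_sq, abs_neg] at hbound
  rw [hz₁, hz₂', abs_re_mul_conj_div_norm_mul_of_common_factor hu (by exact_mod_cast hr)]
  exact ⟨inv_sqrt_le_mul_one_div_abs_add_one hsin three_pos hbound, hbound⟩
end
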